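/- The constant c = (1/Q_∞) ∑_{m≥0} a_{m+1} b_m (the asymptotic proportion of 2-protected nodes in random digital search trees) satisfies 0.30707 < c < 0.30708. -/

import Mathlib

/-!
Since `log 2^{-m} = -m log 2`, each term `a_{m+1} b_m` has the form `r + s / log 2` with `r, s`
rational, and `|a_{m+1} b_m| ≤ 160 · 2^{-binom(m+1,2)}` because `Q_m ≥ 1/4` and `|b_m| ≤ 40`
(using `|x log x| ≤ 1`). So the first eight terms are summed exactly and the rest is below
`10⁻⁸`. The tail product `∏_{k>n} (1 - 2^{-k})` lies between `1 - 2^{-n}` and `1`, which pins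
`Q_∞` between `Q_16 (1 - 2^{-16})` and `Q_16`. The bounds `0.6931471803 < log 2 < 0.6931471808`
finish the estimate.
-/

open Finset

/-- `Q m = ∏_{k=1}^m (1 - 2^{-k})`, with `Q 0 = 1`. -/
noncomputable def Q (m : ℕ) : ℝ := ∏ k ∈ Finset.Icc 1 m, (1 - (2:ℝ) ^ (-(k:ℤ)))

/-- `Q_∞ = ∏_{k≥1} (1 - 2^{-k})`. -/
noncomputable def Qinf : ℝ := ∏' k : ℕ, (1 - (2:ℝ) ^ (-((k:ℤ)+1)))

/-- `aCoef m = a_{m+1} = (-1)^m 2^{-binom(m+1,2)} / Q_m`. -/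
noncomputable def aCoef (m : ℕ) : ℝ :=
  (-1)^m * (2:ℝ) ^ (-((m+1).choose 2 : ℤ)) / Q m

/-- `L = log 2`. -/
noncomputable def Lc : ℝ := Real.log 2

/-- The polynomial-logarithmic function `B` appearing in the residue computation. -/
noncomputable def B (x : ℝ) : ℝ :=
  16*Lc - 48*x*Lc + 48*x^2*Lc - 16*x^3*Lc - 20 + 60*x - 69*x^2 + 36*x^3 - 7*x^4
    - 8*x*Real.log x + 12*x^2*Real.log x - 10*x^3*Real.log x + 4*x^4*Real.log x

/-- `b_0 = 37/(12L) - 4` and, for `m ≥ 1`,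
`b_m = (1/(4L)) B(2^{-m}) / ((2^{-m}-1)³ (2^{-m}-2)²)`. -/
noncomputable def b (m : ℕ) : ℝ :=
  if m = 0 then 37 / (12 * Lc) - 4
  else (1 / (4 * Lc)) * B ((2:ℝ) ^ (-(m:ℤ)))
    / (((2:ℝ) ^ (-(m:ℤ)) - 1)^3 * ((2:ℝ) ^ (-(m:ℤ)) - 2)^2)

open Filter Topology

lemma two_zpow_neg_natCast (n : ℕ) : (2:ℝ) ^ (-(n:ℤ)) = 2⁻¹ ^ n := by
  rw [zpow_neg, zpow_natCast, inv_pow]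

lemma Q_eq_prod_range (m : ℕ) : Q m = ∏ k ∈ range m, (1 - (2⁻¹:ℝ) ^ (k + 1)) := by
  induction m with
  | zero => simp [Q]
  | succ m ih =>
    rw [Q, prod_Icc_succ_top (Nat.le_add_left 1 m), ← Q, ih, prod_range_succ,
      two_zpow_neg_natCast]

lemma Q_succ (m : ℕ) : Q (m + 1) = Q m * (1 - 2⁻¹ ^ (m + 1)) := by
  rw [Q_eq_prod_range, Q_eq_prod_range, prod_range_succ]

lemma Q_pos (m : ℕ) : 0 < Q m := by
  rw [Q_eq_prod_range]
  exact prod_pos fun k _ => sub_pos.2 (pow_lt_one₀ (by norm_num) (by norm_num) k.succ_ne_zero)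

lemma Q_antitone : Antitone Q :=
  antitone_nat_of_succ_le fun m => by
    rw [Q_succ]
    exact mul_le_of_le_one_right (Q_pos m).le (sub_le_self _ (by positivity))

lemma Q_mul_one_sub_le {n m : ℕ} (h : n ≤ m) : Q n * (1 - 2⁻¹ ^ n) ≤ Q m := by
  suffices Q n * (1 - 2⁻¹ ^ n + 2⁻¹ ^ m) ≤ Q m by
    have := Q_pos n
    nlinarith [pow_pos (show (0:ℝ) < 2⁻¹ by norm_num) m]
  induction m, h using Nat.le_induction with
  | base => simp
  | succ m hnm ih =>
    have hmn : (2⁻¹:ℝ) ^ m ≤ 2⁻¹ ^ n :=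
      pow_le_pow_of_le_one (by norm_num) (by norm_num) hnm
    have hu : (2⁻¹:ℝ) ^ m ≤ 1 := pow_le_one₀ (by norm_num) (by norm_num)
    rw [Q_succ, pow_succ]
    have hm0 : (0:ℝ) ≤ 2⁻¹ ^ m := by positivity
    nlinarith [mul_le_mul_of_nonneg_right ih (by linarith : (0:ℝ) ≤ 1 - 2⁻¹ ^ m * 2⁻¹),
      mul_nonneg (mul_nonneg (Q_pos n).le hm0) (sub_nonneg.2 hmn)]

lemma one_fourth_le_Q (m : ℕ) : 1 / 4 ≤ Q m := by
  rcases Nat.eq_zero_or_pos m with rfl | hm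
  · norm_num [Q_eq_prod_range]
  · have h := Q_mul_one_sub_le hm
    rw [show Q 1 = 1 / 2 by norm_num [Q_eq_prod_range]] at h
    linarith

lemma Q_sixteen : Q 16 =
    25157374981998228022475852722520640286875 / 87112285931760246646623899502532662132736 := by
  norm_num [Q_eq_prod_range, prod_range_succ]

lemma hasProd_Qinf : HasProd (fun k : ℕ => 1 - (2⁻¹:ℝ) ^ (k + 1)) Qinf := by
  have hsum : Summable fun k : ℕ => -(2⁻¹:ℝ) ^ (k + 1) :=
    ((summable_nat_add_iff 1).2 (summable_geometric_of_lt_one (by norm_num) (by norm_num))).neg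
  have hprod : Qinf = ∏' k : ℕ, (1 - (2⁻¹:ℝ) ^ (k + 1)) := by
    simp only [Qinf, ← two_zpow_neg_natCast]
    push_cast
    rfl
  simpa only [hprod, ← sub_eq_add_neg] using (Real.multipliable_one_add_of_summable hsum).hasProd

lemma tendsto_Q_Qinf : Tendsto Q atTop (𝓝 Qinf) := by
  simpa only [← Q_eq_prod_range] using hasProd_Qinf.tendsto_prod_nat

lemma Qinf_le_Q (n : ℕ) : Qinf ≤ Q n :=
  Q_antitone.le_of_tendsto tendsto_Q_Qinf n

lemma Q_mul_one_sub_le_Qinf (n : ℕ) : Q n * (1 - 2⁻¹ ^ n) ≤ Qinf :=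
  ge_of_tendsto tendsto_Q_Qinf (eventually_atTop.2 ⟨n, fun _ => Q_mul_one_sub_le⟩)

lemma Qinf_mem_Icc : Qinf ∈ Set.Icc (0.288788095 : ℝ) 0.28879251 := by
  have hlo := Q_mul_one_sub_le_Qinf 16
  have hhi := Qinf_le_Q 16
  rw [Q_sixteen] at hlo hhi
  constructor <;> norm_num at hlo hhi ⊢ <;> linarith

lemma abs_B_le {x : ℝ} (hx0 : 0 < x) (hx : x ≤ 1 / 2) : |B x| ≤ 30 := by
  have hxlog : |x * Real.log x| ≤ 1 := by
    simpa only [mul_comm] using (Real.abs_log_mul_self_lt x hx0 (by linarith)).le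
  have hL0 : 0 < Lc := Real.log_pos one_lt_two
  have hL1 : Lc < 0.7 := Real.log_two_lt_d9.trans (by norm_num)
  have hsplit : B x = (16 * Lc * (1 - x) ^ 3 - 20 + 60 * x - 69 * x ^ 2 + 36 * x ^ 3 - 7 * x ^ 4)
      + x * Real.log x * (-8 + 12 * x - 10 * x ^ 2 + 4 * x ^ 3) := by
    rw [B]; ring
  have hpoly :
      |16 * Lc * (1 - x) ^ 3 - 20 + 60 * x - 69 * x ^ 2 + 36 * x ^ 3 - 7 * x ^ 4| ≤ 22 := by
    have h3 : 0 ≤ (1 - x) ^ 3 := pow_nonneg (by linarith) 3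
    have h3' : (1 - x) ^ 3 ≤ 1 := pow_le_one₀ (by linarith) (by linarith)
    refine abs_le.2 ⟨?_, ?_⟩
    · nlinarith [mul_nonneg hL0.le h3, pow_pos hx0 2, pow_pos hx0 3, pow_pos hx0 4]
    · nlinarith [mul_le_mul_of_nonneg_left h3' hL0.le, pow_pos hx0 2, pow_pos hx0 3, pow_pos hx0 4]
  have hcoef : |-8 + 12 * x - 10 * x ^ 2 + 4 * x ^ 3| ≤ 8 := by
    refine abs_le.2 ⟨?_, ?_⟩ <;> nlinarith [pow_pos hx0 2, pow_pos hx0 3]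
  calc |B x| ≤ 22 + 1 * 8 := by
        rw [hsplit]
        refine (abs_add_le _ _).trans (add_le_add hpoly ?_)
        rw [abs_mul]
        exact mul_le_mul hxlog hcoef (abs_nonneg _) zero_le_one
    _ = 30 := by norm_num

lemma abs_b_le (m : ℕ) : |b m| ≤ 40 := by
  have hL0 : 0.69 < Lc := lt_trans (by norm_num) Real.log_two_gt_d9
  have hL1 : Lc < 0.7 := Real.log_two_lt_d9.trans (by norm_num)
  rcases eq_or_ne m 0 with rfl | hm
  · rw [b, if_pos rfl]
    have : 37 / (12 * Lc) ≤ 37 / (12 * 0.69) := by gcongr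
    have : 37 / (12 * 0.7) ≤ 37 / (12 * Lc) := by gcongr
    refine abs_le.2 ⟨?_, ?_⟩ <;> norm_num at * <;> linarith
  · rw [b, if_neg hm, two_zpow_neg_natCast]
    set x : ℝ := 2⁻¹ ^ m
    have hx0 : 0 < x := by positivity
    have hx : x ≤ 1 / 2 :=
      (pow_le_of_le_one (by norm_num) (by norm_num) hm).trans_eq (by norm_num)
    have hD : 9 / 32 ≤ |(x - 1) ^ 3 * (x - 2) ^ 2| := by
      rw [abs_mul, abs_pow, abs_pow, abs_sub_comm, abs_of_pos (by linarith : 0 < 1 - x),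
        abs_sub_comm, abs_of_pos (by linarith : 0 < 2 - x)]
      calc (9 / 32 : ℝ) = (1 / 2) ^ 3 * (3 / 2) ^ 2 := by norm_num
        _ ≤ (1 - x) ^ 3 * (2 - x) ^ 2 :=
          mul_le_mul (pow_le_pow_left₀ (by norm_num) (by linarith) 3)
            (pow_le_pow_left₀ (by norm_num) (by linarith) 2) (by positivity)
            (pow_nonneg (by linarith) 3)
    rw [one_div_mul_eq_div, div_div, abs_div, abs_mul, abs_of_pos (by linarith : (0:ℝ) < 4 * Lc),
      div_le_iff₀ (by positivity)]
    nlinarith [abs_B_le hx0 hx]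

lemma abs_aCoef_le (m : ℕ) : |aCoef m| ≤ 4 * 2⁻¹ ^ (m + 1).choose 2 := by
  rw [aCoef, two_zpow_neg_natCast, abs_div, abs_mul, abs_pow, abs_neg, abs_one, one_pow, one_mul,
    abs_of_pos (by positivity), abs_of_pos (Q_pos m), div_le_iff₀ (Q_pos m)]
  nlinarith [one_fourth_le_Q m, pow_pos (show (0:ℝ) < 2⁻¹ by norm_num) ((m + 1).choose 2)]

lemma choose_two_add_le (N n : ℕ) : (N + 1).choose 2 + n ≤ (n + N + 1).choose 2 := by
  induction n with
  | zero => simp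
  | succ n ih =>
    have hsucc : (n + N + 1 + 1).choose 2 = (n + N + 1).choose 2 + (n + N + 1) := by
      rw [Nat.choose_succ_succ', Nat.choose_one_right, add_comm]
    rw [show n + 1 + N + 1 = n + N + 1 + 1 by ring, hsucc]
    omega

lemma norm_aCoef_mul_b_add_le (N n : ℕ) :
    ‖aCoef (n + N) * b (n + N)‖ ≤ 160 * 2⁻¹ ^ (N + 1).choose 2 * 2⁻¹ ^ n := by
  have hpow : (2⁻¹:ℝ) ^ (n + N + 1).choose 2 ≤ 2⁻¹ ^ (N + 1).choose 2 * 2⁻¹ ^ n := by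
    rw [← pow_add]
    exact pow_le_pow_of_le_one (by norm_num) (by norm_num) (choose_two_add_le N n)
  rw [Real.norm_eq_abs, abs_mul]
  calc |aCoef (n + N)| * |b (n + N)| ≤ 4 * 2⁻¹ ^ (n + N + 1).choose 2 * 40 :=
        mul_le_mul (abs_aCoef_le _) (abs_b_le _) (abs_nonneg _) (by positivity)
    _ ≤ 160 * 2⁻¹ ^ (N + 1).choose 2 * 2⁻¹ ^ n := by linarith

lemma summable_aCoef_mul_b_add (N : ℕ) : Summable fun n => aCoef (n + N) * b (n + N) :=
  Summable.of_norm_bounded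
    ((summable_geometric_of_lt_one (by norm_num) (by norm_num)).mul_left _)
    (norm_aCoef_mul_b_add_le N)

lemma summable_aCoef_mul_b : Summable fun m => aCoef m * b m := by
  simpa using summable_aCoef_mul_b_add 0

lemma abs_tsum_aCoef_mul_b_add_le (N : ℕ) :
    |∑' n, aCoef (n + N) * b (n + N)| ≤ 320 * 2⁻¹ ^ (N + 1).choose 2 := by
  have hg : Summable fun n : ℕ => 160 * (2⁻¹:ℝ) ^ (N + 1).choose 2 * 2⁻¹ ^ n :=
    (summable_geometric_of_lt_one (by norm_num) (by norm_num)).mul_left _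
  have hf := (summable_aCoef_mul_b_add N).norm
  calc |∑' n, aCoef (n + N) * b (n + N)| ≤ ∑' n, ‖aCoef (n + N) * b (n + N)‖ :=
        norm_tsum_le_tsum_norm hf
    _ ≤ ∑' n : ℕ, 160 * (2⁻¹:ℝ) ^ (N + 1).choose 2 * 2⁻¹ ^ n :=
        hf.tsum_le_tsum (norm_aCoef_mul_b_add_le N) hg
    _ = 320 * 2⁻¹ ^ (N + 1).choose 2 := by
        rw [tsum_mul_left, tsum_geometric_inv_two]; ring

lemma sum_range_eight_aCoef_mul_b :
    ∑ m ∈ range 8, aCoef m * b m =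
      -14300526696536603747352432068 / 14355588861370568242010593125
        + 6144275523394332819361 / 8171040590345885080500 / Real.log 2 := by
  have hL : Real.log 2 ≠ 0 := (Real.log_pos one_lt_two).ne'
  simp only [sum_range_succ, sum_range_zero, aCoef, b, B, Lc, Q_eq_prod_range, prod_range_succ,
    prod_range_zero, Real.log_zpow, Nat.choose_two_right]
  norm_num
  field_simp
  ring

lemma tsum_aCoef_mul_b_mem_Icc :
    ∑' m, aCoef m * b m ∈ Set.Icc (0.08868097 : ℝ) 0.08868102 := by
  have hs : (0:ℝ) ≤ 6144275523394332819361 / 8171040590345885080500 := by norm_num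
  have hlo := div_le_div_of_nonneg_left hs (by positivity) Real.log_two_lt_d9.le
  have hhi := div_le_div_of_nonneg_left hs (by norm_num) Real.log_two_gt_d9.le
  have htail := abs_le.1 (abs_tsum_aCoef_mul_b_add_le 8)
  rw [← summable_aCoef_mul_b.sum_add_tsum_nat_add 8, sum_range_eight_aCoef_mul_b]
  constructor <;> norm_num [Nat.choose_two_right] at hlo hhi htail ⊢ <;> linarith

/-- The asymptotic proportion of 2-protected nodes in random digital search trees,
`c = (1/Q_∞) ∑_{m≥0} a_{m+1} b_m`, satisfies `0.30707 < c < 0.30708`. -/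
theorem dst_constant_bounds :
    0.30707 < (1 / Qinf) * ∑' m : ℕ, aCoef m * b m ∧
      (1 / Qinf) * ∑' m : ℕ, aCoef m * b m < 0.30708 := by
  obtain ⟨hS_lo, hS_hi⟩ := tsum_aCoef_mul_b_mem_Icc
  obtain ⟨hQ_lo, hQ_hi⟩ := Qinf_mem_Icc
  have hQ : 0 < Qinf := lt_of_lt_of_le (by norm_num) hQ_lo
  rw [one_div_mul_eq_div, lt_div_iff₀ hQ, div_lt_iff₀ hQ]
  constructor <;> nlinarith
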